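/- arXiv:0710.5826 — 6 statements merged into one kernel-verified Lean document; each statement's English description precedes it below -/
import Mathlib

section
/- For every α ∈ (0,1) and x > 0, the function Φ(x) := Γ(1-α)·Γ(αx+1)/Γ(α(x-1)+1) - 1 satisfies Φ(x) = ∫_0^∞ (1 - e^{-xy}) · e^{-y/α}/(1 - e^{-y/α})^{α+1} dy. -/
/-!
Substituting `t = e^{-y/α}` turns the integral into `α ∫₀¹ (1 - t^{αx}) (1 - t)^{-α-1} dt`.
Integrating by parts against `(1 - t)^{-β}`, with boundary values `1` at `t = 0` and `0` at `t = 1`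
(because `1 - t^a = O(1 - t)`), gives `β ∫₀¹ (1 - t^a) (1 - t)^{-β-1} dt = a B(a, 1 - β) - 1`,
and `a B(a, 1 - β) = Γ(1 - β) Γ(a + 1) / Γ(a + 1 - β)`.
-/

open MeasureTheory Real Set Filter Topology

theorem ofReal_rpow_mul_one_sub_rpow {t : ℝ} (ht : t ∈ Icc (0 : ℝ) 1) (a b : ℝ) :
    (((t ^ (a - 1) * (1 - t) ^ (b - 1) : ℝ)) : ℂ)
      = (t : ℂ) ^ ((a : ℂ) - 1) * (1 - (t : ℂ)) ^ ((b : ℂ) - 1) := by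
  have h1 : 0 ≤ 1 - t := sub_nonneg.2 ht.2
  push_cast [Complex.ofReal_mul, Complex.ofReal_cpow ht.1, Complex.ofReal_cpow h1]
  rfl

theorem integrableOn_rpow_mul_one_sub_rpow {a b : ℝ} (ha : 0 < a) (hb : 0 < b) :
    IntegrableOn (fun t : ℝ ↦ t ^ (a - 1) * (1 - t) ^ (b - 1)) (Ioo 0 1) := by
  have h := Complex.betaIntegral_convergent (u := a) (v := b) (by simpa) (by simpa)
  rw [intervalIntegrable_iff_integrableOn_Ioo_of_le zero_le_one] at h
  simpa [IntegrableOn] using (h.congr_fun (fun t ht ↦ (ofReal_rpow_mul_one_sub_rpow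
    (Ioo_subset_Icc_self ht) a b).symm) measurableSet_Ioo).re

theorem integral_rpow_mul_one_sub_rpow {a b : ℝ} (ha : 0 < a) (hb : 0 < b) :
    ∫ t in Ioo 0 1, t ^ (a - 1) * (1 - t) ^ (b - 1) = Gamma a * Gamma b / Gamma (a + b) := by
  have h := Complex.betaIntegral_eq_Gamma_mul_div a b (by simpa) (by simpa)
  rw [Complex.betaIntegral, ← intervalIntegral.integral_congr (fun t ht ↦
      ofReal_rpow_mul_one_sub_rpow (by rwa [uIcc_of_le zero_le_one] at ht) a b),
    intervalIntegral.integral_ofReal, intervalIntegral.integral_of_le zero_le_one,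
    integral_Ioc_eq_integral_Ioo, ← Complex.ofReal_add, Complex.Gamma_ofReal,
    Complex.Gamma_ofReal, Complex.Gamma_ofReal] at h
  exact_mod_cast h

theorem one_sub_rpow_le_mul_one_sub {t : ℝ} (ht : t ∈ Icc (0 : ℝ) 1) (a : ℝ) :
    1 - t ^ a ≤ max 1 a * (1 - t) := by
  rcases le_total a 1 with ha | ha
  · have := self_le_rpow_of_le_one ht.1 ht.2 ha
    nlinarith [le_max_left 1 a, ht.2]
  · have := one_add_mul_self_le_rpow_one_add (s := t - 1) (by linarith [ht.1]) ha
    rw [add_sub_cancel] at this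
    nlinarith [le_max_right 1 a, ht.2]

theorem integral_Ioi_exp_neg_div_smul {E : Type*} [NormedAddCommGroup E] [NormedSpace ℝ E]
    {α : ℝ} (hα : 0 < α) (g : ℝ → E) :
    ∫ y in Ioi 0, exp (-y / α) • g (exp (-y / α)) = α • ∫ t in Ioo 0 1, g t := by
  have himage : (fun y ↦ exp (-y / α)) '' Ioi 0 = Ioo 0 1 := by
    have : (fun y : ℝ ↦ -y / α) '' Ioi 0 = Iio 0 := by
      ext z
      refine ⟨fun ⟨y, hy, hz⟩ ↦ hz ▸ div_neg_of_neg_of_pos (neg_neg_of_pos hy) hα,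
        fun hz ↦ ⟨-(z * α), neg_pos.2 (mul_neg_of_neg_of_pos hz hα), by field_simp⟩⟩
    rw [← exp_zero, ← image_exp_Iio, ← this, image_image]
  have hderiv (y : ℝ) (_ : y ∈ Ioi (0 : ℝ)) : HasDerivWithinAt (fun y ↦ exp (-y / α))
      (exp (-y / α) * (-1 / α)) (Ioi 0) y :=
    ((hasDerivAt_id y).neg.div_const α).exp.hasDerivWithinAt
  have hinj : InjOn (fun y ↦ exp (-y / α)) (Ioi 0) := fun y _ z _ h ↦ by
    simpa [hα.ne'] using exp_injective h
  rw [← himage, integral_image_eq_integral_abs_deriv_smul measurableSet_Ioi hderiv hinj,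
    ← integral_smul]
  refine setIntegral_congr_fun measurableSet_Ioi fun y _ ↦ ?_
  rw [smul_smul, abs_mul, abs_of_pos (exp_pos _), abs_div, abs_neg, abs_one, abs_of_pos hα]
  field_simp

theorem one_sub_rpow_mul_one_sub_rpow_le {t : ℝ} (ht : t ∈ Ico (0 : ℝ) 1) (a γ : ℝ) :
    (1 - t ^ a) * (1 - t) ^ γ ≤ max 1 a * (1 - t) ^ (γ + 1) := by
  have ht' : 0 < 1 - t := sub_pos.2 ht.2
  rw [rpow_add ht', rpow_one, mul_comm _ (1 - t), ← mul_assoc]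
  exact mul_le_mul_of_nonneg_right (one_sub_rpow_le_mul_one_sub (Ico_subset_Icc_self ht) a)
    (rpow_nonneg ht'.le γ)

theorem integrableOn_one_sub_rpow_mul_one_sub_rpow {a β : ℝ} (ha : 0 ≤ a) (hβ : β < 1) :
    IntegrableOn (fun t : ℝ ↦ (1 - t ^ a) * (1 - t) ^ (-β - 1)) (Ioo 0 1) := by
  have hdom : IntegrableOn (fun t : ℝ ↦ max 1 a * (1 - t) ^ (-β)) (Ioo 0 1) := by
    have h := (intervalIntegral.intervalIntegrable_rpow' (a := 0) (b := 1)
      (show -1 < -β by linarith)).comp_sub_left 1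
    rw [sub_zero, sub_self, IntervalIntegrable.symm_iff,
      intervalIntegrable_iff_integrableOn_Ioo_of_le zero_le_one] at h
    exact h.const_mul _
  refine hdom.mono' ?_ ((ae_restrict_iff' measurableSet_Ioo).2 (ae_of_all _ fun t ht ↦ ?_))
  · refine ContinuousOn.aestronglyMeasurable (fun t ht ↦ ?_) measurableSet_Ioo
    have : 0 < 1 - t := sub_pos.2 ht.2
    exact ((continuousAt_const.sub (continuousAt_id.rpow_const (Or.inl ht.1.ne'))).mul
      ((continuousAt_const.sub continuousAt_id).rpow_const (Or.inl this.ne'))).continuousWithinAt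
  · have hnonneg : 0 ≤ (1 - t ^ a) * (1 - t) ^ (-β - 1) :=
      mul_nonneg (sub_nonneg.2 (rpow_le_one ht.1.le ht.2.le ha))
        (rpow_nonneg (sub_pos.2 ht.2).le _)
    rw [norm_of_nonneg hnonneg]
    simpa using one_sub_rpow_mul_one_sub_rpow_le (Ioo_subset_Ico_self ht) a (-β - 1)

theorem hasDerivAt_one_sub_rpow_mul_one_sub_rpow {t : ℝ} (ht : t ∈ Ioo (0 : ℝ) 1) (a β : ℝ) :
    HasDerivAt (fun t ↦ (1 - t ^ a) * (1 - t) ^ (-β))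
      (β * ((1 - t ^ a) * (1 - t) ^ (-β - 1)) - a * (t ^ (a - 1) * (1 - t) ^ (1 - β - 1)))
      t := by
  have h1 : HasDerivAt (fun t ↦ 1 - t ^ a) (-(a * t ^ (a - 1))) t :=
    (hasDerivAt_rpow_const (Or.inl ht.1.ne')).const_sub 1
  have h2 : HasDerivAt (fun t ↦ (1 - t) ^ (-β)) (-β * (1 - t) ^ (-β - 1) * -1) t := by
    simpa using
      ((hasDerivAt_id t).const_sub 1).rpow_const (p := -β) (Or.inl (sub_pos.2 ht.2).ne')
  refine (h1.mul h2).congr_deriv ?_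
  rw [show 1 - β - 1 = -β by ring]
  ring

theorem tendsto_one_sub_rpow_mul_one_sub_rpow_nhdsGT_zero {a : ℝ} (ha : 0 < a) (β : ℝ) :
    Tendsto (fun t : ℝ ↦ (1 - t ^ a) * (1 - t) ^ (-β)) (𝓝[>] 0) (𝓝 1) := by
  have hcont : ContinuousAt (fun t : ℝ ↦ (1 - t ^ a) * (1 - t) ^ (-β)) 0 :=
    (continuousAt_const.sub (continuousAt_id.rpow_const (Or.inr ha.le))).mul
      ((continuousAt_const.sub continuousAt_id).rpow_const (Or.inl (by norm_num)))
  simpa [zero_rpow ha.ne'] using hcont.tendsto.mono_left nhdsWithin_le_nhds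

theorem tendsto_one_sub_rpow_mul_one_sub_rpow_nhdsLT_one {a β : ℝ} (ha : 0 ≤ a) (hβ : β < 1) :
    Tendsto (fun t : ℝ ↦ (1 - t ^ a) * (1 - t) ^ (-β)) (𝓝[<] 1) (𝓝 0) := by
  have hbound : Tendsto (fun t : ℝ ↦ max 1 a * (1 - t) ^ (-β + 1)) (𝓝[<] 1) (𝓝 0) := by
    have : ContinuousAt (fun t : ℝ ↦ max 1 a * (1 - t) ^ (-β + 1)) 1 :=
      continuousAt_const.mul ((continuousAt_const.sub continuousAt_id).rpow_const
        (Or.inr (by linarith)))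
    simpa [zero_rpow (show -β + 1 ≠ 0 by linarith)] using
      this.tendsto.mono_left nhdsWithin_le_nhds
  refine squeeze_zero' ?_ ?_ hbound <;> filter_upwards [Ioo_mem_nhdsLT zero_lt_one] with t ht
  · exact mul_nonneg (sub_nonneg.2 (rpow_le_one ht.1.le ht.2.le ha))
      (rpow_nonneg (sub_pos.2 ht.2).le _)
  · exact one_sub_rpow_mul_one_sub_rpow_le (Ioo_subset_Ico_self ht) a (-β)

theorem mul_integral_one_sub_rpow_mul_one_sub_rpow {a β : ℝ} (ha : 0 < a) (hβ : β ∈ Ioo 0 1) :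
    β * ∫ t in Ioo 0 1, (1 - t ^ a) * (1 - t) ^ (-β - 1)
      = Gamma (1 - β) * Gamma (a + 1) / Gamma (a + 1 - β) - 1 := by
  have hb : 0 < 1 - β := sub_pos.2 hβ.2
  have hJ := (integrableOn_one_sub_rpow_mul_one_sub_rpow ha.le hβ.2).const_mul β
  have hB := (integrableOn_rpow_mul_one_sub_rpow ha hb).const_mul a
  have hFTC := intervalIntegral.integral_eq_sub_of_hasDerivAt_of_tendsto zero_lt_one
    (fun t ht ↦ hasDerivAt_one_sub_rpow_mul_one_sub_rpow ht a β)
    ((intervalIntegrable_iff_integrableOn_Ioo_of_le zero_le_one).2 (hJ.sub hB))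
    (tendsto_one_sub_rpow_mul_one_sub_rpow_nhdsGT_zero ha β)
    (tendsto_one_sub_rpow_mul_one_sub_rpow_nhdsLT_one ha.le hβ.2)
  rw [intervalIntegral.integral_of_le zero_le_one, integral_Ioc_eq_integral_Ioo,
    integral_sub hJ hB, integral_const_mul, integral_const_mul,
    integral_rpow_mul_one_sub_rpow ha hb] at hFTC
  rw [Gamma_add_one ha.ne', show a + 1 - β = a + (1 - β) by ring]
  linear_combination hFTC

/-- For every `α ∈ (0,1)` and `x > 0`, the function
`Φ(x) = Γ(1-α)·Γ(αx+1)/Γ(α(x-1)+1) - 1` equals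
`∫_0^∞ (1 - e^{-xy}) · e^{-y/α}/(1 - e^{-y/α})^{α+1} dy`. -/
theorem gammaRatio_eq_levyIntegral (α x : ℝ) (hα : α ∈ Set.Ioo (0:ℝ) 1) (hx : 0 < x) :
    Real.Gamma (1 - α) * Real.Gamma (α * x + 1) / Real.Gamma (α * (x - 1) + 1) - 1
      = ∫ y in Set.Ioi (0:ℝ),
          (1 - Real.exp (-x * y)) *
            (Real.exp (-y / α) / (1 - Real.exp (-y / α)) ^ (α + 1)) := by
  have hsubst : ∀ y ∈ Ioi (0 : ℝ),
      (1 - exp (-x * y)) * (exp (-y / α) / (1 - exp (-y / α)) ^ (α + 1))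
        = exp (-y / α) • ((1 - exp (-y / α) ^ (α * x)) * (1 - exp (-y / α)) ^ (-α - 1)) := by
    intro y hy
    have hu : 0 ≤ 1 - exp (-y / α) := sub_nonneg.2 (exp_le_one_iff.2
      (div_nonpos_of_nonpos_of_nonneg (neg_nonpos.2 hy.le) hα.1.le))
    rw [← exp_mul, show -y / α * (α * x) = -x * y by field_simp [hα.1.ne'],
      show -α - 1 = -(α + 1) by ring, rpow_neg hu, smul_eq_mul]
    ring
  rw [setIntegral_congr_fun measurableSet_Ioi hsubst, integral_Ioi_exp_neg_div_smul hα.1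
      (fun t ↦ (1 - t ^ (α * x)) * (1 - t) ^ (-α - 1)),
    smul_eq_mul, mul_integral_one_sub_rpow_mul_one_sub_rpow (mul_pos hα.1 hx) hα,
    show α * (x - 1) + 1 = α * x + 1 - α by ring]
end

section
/- Let 0 < a < 2 and define p_k = (2-a)·Γ(a+k-1)/(Γ(a)·Γ(k+2)) for k ∈ ℕ, k ≥ 1. Then p_k ≥ 0 for all k and ∑_{k=1}^∞ p_k = 1, i.e., (p_k) is a probability distribution on the positive integers. -/
open Real Filter Topology

private lemma gamma_ratio_tendsto (a : ℝ) (ha : 0 < a) (ha2 : a < 2) :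
    Tendsto (fun n : ℕ => Real.Gamma (a + n) / Real.Gamma ((n : ℝ) + 2)) atTop (𝓝 0) := by
  have hpos : ∀ n : ℕ, 0 < Real.Gamma (a + n) := fun n =>
    Real.Gamma_pos_of_pos (by positivity)
  have hpos2 : ∀ n : ℕ, 0 < Real.Gamma ((n : ℝ) + 2) := fun n =>
    Real.Gamma_pos_of_pos (by positivity)
  have hbound : ∀ n : ℕ, 1 ≤ n →
      Real.Gamma (a + n) / Real.Gamma ((n : ℝ) + 2) ≤ (n : ℝ) ^ (-(1 - a / 2)) := by
    intro n hn
    have hn1 : (1 : ℝ) ≤ (n : ℝ) := by exact_mod_cast hn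
    have hn0 : (0 : ℝ) < (n : ℝ) := by linarith
    have hΓn : 0 < Real.Gamma (n : ℝ) := Real.Gamma_pos_of_pos hn0
    have hΓn2 : 0 < Real.Gamma ((n : ℝ) + 2) := hpos2 n
    -- log-convexity
    have hconv := Real.convexOn_log_Gamma.2 (Set.mem_Ioi.mpr hn0)
      (Set.mem_Ioi.mpr (by linarith : (0:ℝ) < (n : ℝ) + 2))
      (by linarith : (0:ℝ) ≤ 1 - a / 2) (by linarith : (0:ℝ) ≤ a / 2) (by ring)
    have hcomb : (1 - a / 2) • (n : ℝ) + (a / 2) • ((n : ℝ) + 2) = a + n := by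
      simp [smul_eq_mul]; ring
    rw [hcomb] at hconv
    simp only [Function.comp_apply, smul_eq_mul] at hconv
    have h1 : Real.Gamma (a + n) ≤
        Real.Gamma (n : ℝ) ^ (1 - a / 2) * Real.Gamma ((n : ℝ) + 2) ^ (a / 2) := by
      calc Real.Gamma (a + n) = Real.exp (Real.log (Real.Gamma (a + n))) :=
            (Real.exp_log (hpos n)).symm
        _ ≤ Real.exp ((1 - a / 2) * Real.log (Real.Gamma (n : ℝ)) +
              a / 2 * Real.log (Real.Gamma ((n : ℝ) + 2))) := Real.exp_le_exp.mpr hconv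
        _ = Real.Gamma (n : ℝ) ^ (1 - a / 2) * Real.Gamma ((n : ℝ) + 2) ^ (a / 2) := by
            rw [mul_comm (1 - a / 2), mul_comm (a / 2), Real.exp_add,
              ← Real.rpow_def_of_pos hΓn, ← Real.rpow_def_of_pos hΓn2]
    have h2 : Real.Gamma (a + n) / Real.Gamma ((n : ℝ) + 2) ≤
        (Real.Gamma (n : ℝ) / Real.Gamma ((n : ℝ) + 2)) ^ (1 - a / 2) := by
      rw [Real.div_rpow hΓn.le hΓn2.le]
      rw [div_le_div_iff₀ hΓn2 (by positivity)]
      calc Real.Gamma (a + n) * Real.Gamma ((n : ℝ) + 2) ^ (1 - a / 2)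
          ≤ (Real.Gamma (n : ℝ) ^ (1 - a / 2) * Real.Gamma ((n : ℝ) + 2) ^ (a / 2)) *
            Real.Gamma ((n : ℝ) + 2) ^ (1 - a / 2) := by
            apply mul_le_mul_of_nonneg_right h1 (by positivity)
        _ = Real.Gamma (n : ℝ) ^ (1 - a / 2) * Real.Gamma ((n : ℝ) + 2) := by
            rw [mul_assoc, ← Real.rpow_add hΓn2]
            norm_num
    -- compute the ratio Γ(n)/Γ(n+2) = 1/(n(n+1))
    have hrec : Real.Gamma ((n : ℝ) + 2) = ((n : ℝ) + 1) * (n : ℝ) * Real.Gamma (n : ℝ) := by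
      have e1 : ((n : ℝ) + 2) = ((n : ℝ) + 1) + 1 := by ring
      rw [e1, Real.Gamma_add_one (by linarith), Real.Gamma_add_one (ne_of_gt hn0)]
      ring
    have hratio : Real.Gamma (n : ℝ) / Real.Gamma ((n : ℝ) + 2) = 1 / ((n : ℝ) * ((n : ℝ) + 1)) := by
      rw [hrec]; field_simp
    rw [hratio] at h2
    refine h2.trans ?_
    rw [Real.rpow_neg hn0.le, ← Real.inv_rpow hn0.le]
    apply Real.rpow_le_rpow (by positivity) _ (by linarith)
    rw [← one_div]
    gcongr
    · nlinarith
  have hb : Tendsto (fun n : ℕ => (n : ℝ) ^ (-(1 - a / 2))) atTop (𝓝 0) :=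
    (tendsto_rpow_neg_atTop (by linarith : (0:ℝ) < 1 - a / 2)).comp
      tendsto_natCast_atTop_atTop
  refine tendsto_of_tendsto_of_tendsto_of_le_of_le' tendsto_const_nhds hb ?_ ?_
  · filter_upwards with n using le_of_lt (by positivity)
  · filter_upwards [eventually_ge_atTop 1] with n hn using hbound n hn

/-- For `0 < a < 2`, the numbers `p_k = (2-a)·Γ(a+k-1)/(Γ(a)·Γ(k+2))`, `k ≥ 1`,
are nonnegative and sum to one, i.e. they form a probability distribution
on the positive integers. -/
theorem beta_coalescent_pk_prob (a : ℝ) (ha : 0 < a) (ha2 : a < 2) :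
    (∀ k : ℕ, 1 ≤ k →
        0 ≤ (2 - a) * Real.Gamma (a + k - 1) / (Real.Gamma a * Real.Gamma (k + 2))) ∧
    (∑' k : ℕ, (2 - a) * Real.Gamma (a + (k + 1) - 1) /
        (Real.Gamma a * Real.Gamma ((k + 1 : ℕ) + 2)) = 1) := by
  have hΓa : 0 < Real.Gamma a := Real.Gamma_pos_of_pos ha
  have hnonneg : ∀ k : ℕ, 1 ≤ k →
      0 ≤ (2 - a) * Real.Gamma (a + k - 1) / (Real.Gamma a * Real.Gamma (k + 2)) := by
    intro k hk
    have hk1 : (1 : ℝ) ≤ (k : ℝ) := by exact_mod_cast hk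
    have h1 : 0 < Real.Gamma (a + k - 1) := Real.Gamma_pos_of_pos (by linarith)
    have h2 : 0 < Real.Gamma ((k : ℝ) + 2) := Real.Gamma_pos_of_pos (by positivity)
    have h3 : 0 < 2 - a := by linarith
    positivity
  refine ⟨hnonneg, ?_⟩
  set f : ℕ → ℝ := fun k => (2 - a) * Real.Gamma (a + (k + 1) - 1) /
      (Real.Gamma a * Real.Gamma (((k + 1 : ℕ) : ℝ) + 2)) with hf
  set v : ℕ → ℝ := fun n => Real.Gamma (a + n) / (Real.Gamma a * Real.Gamma ((n : ℝ) + 2))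
    with hv
  have hstep : ∀ k : ℕ, f k = v k - v (k + 1) := by
    intro k
    have hΓk2 : 0 < Real.Gamma ((k : ℝ) + 2) := Real.Gamma_pos_of_pos (by positivity)
    have hak : (0:ℝ) < a + k := by positivity
    have e1 : a + ((k : ℝ) + 1) - 1 = a + k := by ring
    have e2 : (((k + 1 : ℕ) : ℝ)) + 2 = ((k : ℝ) + 2) + 1 := by push_cast; ring
    have e3 : a + ((k + 1 : ℕ) : ℝ) = (a + k) + 1 := by push_cast; ring
    simp only [hf, hv, e1, e2, e3,
      Real.Gamma_add_one (by positivity : ((k : ℝ) + 2) ≠ 0),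
      Real.Gamma_add_one (ne_of_gt hak)]
    field_simp
    ring
  have hv0 : v 0 = 1 := by
    simp only [hv, Nat.cast_zero, add_zero, zero_add, Real.Gamma_two, mul_one, div_self hΓa.ne']
  have hvlim : Tendsto v atTop (𝓝 0) := by
    have := (gamma_ratio_tendsto a ha ha2).div_const (Real.Gamma a)
    rw [zero_div] at this
    convert this using 2 with n
    simp only [hv]
    rw [div_div]
    ring_nf
  have hsum : HasSum f 1 := by
    rw [hasSum_iff_tendsto_nat_of_nonneg (fun k => by
      have h := hnonneg (k + 1) (Nat.le_add_left 1 k)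
      simp only [hf]
      push_cast at h ⊢
      exact h)]
    have : ∀ n : ℕ, ∑ i ∈ Finset.range n, f i = v 0 - v n := by
      intro n
      simp only [hstep]
      exact Finset.sum_range_sub' v n
    simp only [this, hv0]
    simpa using (tendsto_const_nhds (x := (1:ℝ))).sub hvlim
  exact hsum.tsum_eq
end

section
/- Let 0 < a < 1 and let ξ be as above with ℙ{ξ ≥ n} = Γ(a+n-1)/(Γ(a)Γ(n+1)). Then 𝔼ξ = 1/(1-a), and ∑_{k=1}^n k² ℙ{ξ = k} ∼ ((2-a)/Γ(a+1))·n^a as n → ∞. In particular the variance of ξ is infinite. -/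
/-!
Write `T k = Γ(a+k-1)/(Γ(a)Γ(k+1))` for the tail. It satisfies `(k+1) T(k+1) = (a+k-1) T(k)`,
so `ℙ{ξ = k} = T k - T (k+1)` and both `k ℙ{ξ = k}` and `k² ℙ{ξ = k}` are the increments of
explicit functions of the form (polynomial in `k`) · `T k`; the moment sums telescope.
Wendel's limit `Γ(n+s)/(Γ(n) nˢ) → 1`, a consequence of Euler's limit formula, gives
`T(n+1) ∼ n^(a-2)/Γ(a)`: the first primitive tends to `0`, leaving the mean `1/(1-a)`,
while the second grows like `(2-a)/Γ(a+1) · nᵃ`.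
-/

open MeasureTheory Real Filter Finset Topology

namespace Real

theorem Gamma_add_nat_add_one_eq_mul_prod {s : ℝ} (hs : ∀ m : ℕ, s ≠ -m) (n : ℕ) :
    Gamma (s + n + 1) = Gamma s * ∏ j ∈ range (n + 1), (s + j) := by
  have hsj (j : ℕ) : s + j ≠ 0 := fun h => hs j (by linarith)
  induction n with
  | zero => simpa [mul_comm] using Gamma_add_one (hsj 0)
  | succ n ih =>
    have hsn : s + n + 1 ≠ 0 := by simpa [add_assoc] using hsj (n + 1)
    rw [prod_range_succ, ← mul_assoc, ← ih, Nat.cast_succ, ← add_assoc, Gamma_add_one hsn,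
      mul_comm]

theorem tendsto_Gamma_nat_add_div_Gamma_mul_rpow {s : ℝ} (hs : ∀ m : ℕ, s ≠ -m) :
    Tendsto (fun n : ℕ => Gamma (n + s) / (Gamma n * (n : ℝ) ^ s)) atTop (𝓝 1) := by
  have hΓ : Gamma s ≠ 0 := Gamma_ne_zero hs
  have hlim := (tendsto_const_nhds (x := Gamma s)).div (GammaSeq_tendsto_Gamma s) hΓ
    |>.mul (tendsto_natCast_div_add_atTop s)
  rw [div_self hΓ, one_mul] at hlim
  refine hlim.congr' ?_
  filter_upwards [eventually_ge_atTop 1] with n hn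
  have hn0 : (n : ℝ) ≠ 0 := by positivity
  have hns : (n : ℝ) + s ≠ 0 := fun h => hs n (by linarith)
  have hprod : Gamma s * ∏ j ∈ range (n + 1), (s + j) = (n + s) * Gamma (n + s) := by
    rw [← Gamma_add_nat_add_one_eq_mul_prod hs, ← Gamma_add_one hns, add_comm (n : ℝ) s]
  have hfact : (n.factorial : ℝ) = n * Gamma n := by
    rw [← Gamma_nat_eq_factorial, Gamma_add_one hn0]
  have hpow : (n : ℝ) ^ s ≠ 0 := by positivity
  have hΓn : Gamma n ≠ 0 := by positivity
  change Gamma s / GammaSeq s n * (n / (n + s)) = _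
  rw [GammaSeq, hfact, div_div_eq_mul_div, hprod]
  field_simp

end Real

theorem sum_range_succ_eq_sub_of_eq_succ_sub {M : Type*} [AddCommGroup M] {f Φ : ℕ → M}
    (h0 : f 0 = 0) (h : ∀ k, 1 ≤ k → f k = Φ (k + 1) - Φ k) (n : ℕ) :
    ∑ k ∈ range (n + 1), f k = Φ (n + 1) - Φ 1 := by
  rw [sum_range_succ', h0, add_zero]
  exact (sum_congr rfl fun k _ => h (k + 1) (by omega)).trans (sum_range_sub (fun k => Φ (k + 1)) n)

theorem not_summable_of_tendsto_sum_range_div {f g : ℕ → ℝ} (hg : Tendsto g atTop atTop)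
    (h : Tendsto (fun n => (∑ k ∈ range (n + 1), f k) / g n) atTop (𝓝 1)) : ¬ Summable f := by
  intro hf
  have hsum := (tendsto_add_atTop_iff_nat 1).2 hf.hasSum.tendsto_sum_nat
  exact one_ne_zero (tendsto_nhds_unique h (hsum.div_atTop hg))

theorem toReal_measure_eq_toReal_tail_sub {Ω : Type*} [MeasurableSpace Ω] {μ : Measure Ω}
    {ξ : Ω → ℕ} (hξ : Measurable ξ) {k : ℕ} (hk : μ {ω | k ≤ ξ ω} ≠ ⊤) :
    (μ {ω | ξ ω = k}).toReal = (μ {ω | k ≤ ξ ω}).toReal - (μ {ω | k + 1 ≤ ξ ω}).toReal := by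
  have hsub : {ω | k + 1 ≤ ξ ω} ⊆ {ω | k ≤ ξ ω} := fun _ h => (Nat.le_succ k).trans h
  have hdiff : {ω | ξ ω = k} = {ω | k ≤ ξ ω} \ {ω | k + 1 ≤ ξ ω} := by
    ext ω
    simp only [Set.mem_ofPred_eq, Set.mem_sdiff]
    omega
  rw [hdiff, measure_sdiff hsub (hξ measurableSet_Ici).nullMeasurableSet
    (ne_top_of_le_ne_top hk (measure_mono hsub)), ENNReal.toReal_sub_of_le (measure_mono hsub) hk]

theorem tendsto_sq_add_linear_div_mul_succ (b c : ℝ) :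
    Tendsto (fun n : ℕ => (((n : ℝ) + 1) ^ 2 + b * (n + 1) + c) / (n * (n + 1))) atTop (𝓝 1) := by
  let g : ℝ → ℝ := fun x => ((1 + x) ^ 2 + b * x * (1 + x) + c * x ^ 2) / (1 + x)
  have hg : ContinuousAt g 0 := by fun_prop (disch := norm_num)
  have hlim := hg.tendsto.comp (tendsto_inv_atTop_nhds_zero_nat (𝕜 := ℝ))
  norm_num [g] at hlim
  refine hlim.congr' ?_
  filter_upwards [eventually_ge_atTop 1] with n hn
  have hn0 : (n : ℝ) ≠ 0 := by positivity
  simp only [Function.comp_apply]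
  field_simp

noncomputable def betaTail (a : ℝ) (n : ℕ) : ℝ :=
  Gamma (a + n - 1) / (Gamma a * Gamma (n + 1))

-- Primitives of `k ↦ k ℙ{ξ = k}` and `k ↦ k² ℙ{ξ = k}`; the polynomial coefficients are solved
-- from the recursion `betaTail_succ`.
noncomputable def firstMomentPrimitive (a : ℝ) (k : ℕ) : ℝ :=
  (1 - (2 - a) * k / (1 - a)) * betaTail a k

noncomputable def secondMomentPrimitive (a : ℝ) (k : ℕ) : ℝ :=
  ((2 - a) / a * k ^ 2 + (2 - a) * (2 * a - 1) / (a * (1 - a)) * k - 1) * betaTail a k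

section BetaTail

variable {a : ℝ}

theorem betaTail_nonneg (ha : 0 ≤ a) {k : ℕ} (hk : 1 ≤ k) : 0 ≤ betaTail a k :=
  div_nonneg (Gamma_nonneg_of_nonneg (by linarith [(Nat.one_le_cast (α := ℝ)).2 hk]))
    (mul_nonneg (Gamma_nonneg_of_nonneg ha) (Gamma_nonneg_of_nonneg (by positivity)))

theorem betaTail_one (ha : Gamma a ≠ 0) : betaTail a 1 = 1 := by
  simp [betaTail, one_add_one_eq_two, ha]

theorem betaTail_succ {k : ℕ} (hk : a + k - 1 ≠ 0) :
    betaTail a (k + 1) = betaTail a k * (a + k - 1) / (k + 1) := by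
  have hk1 : (k : ℝ) + 1 ≠ 0 := by positivity
  unfold betaTail
  rw [Nat.cast_succ, show a + (k + 1) - 1 = a + k - 1 + 1 by ring, Gamma_add_one hk,
    Gamma_add_one hk1]
  field_simp

theorem firstMomentPrimitive_succ_sub (ha : a ≠ 1) {k : ℕ} (hk : a + k - 1 ≠ 0) :
    firstMomentPrimitive a (k + 1) - firstMomentPrimitive a k =
      k * (betaTail a k - betaTail a (k + 1)) := by
  have h1a : 1 - a ≠ 0 := sub_ne_zero.2 (Ne.symm ha)
  have hk1 : (k : ℝ) + 1 ≠ 0 := by positivity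
  unfold firstMomentPrimitive
  rw [betaTail_succ hk]
  push_cast
  field_simp
  ring

theorem secondMomentPrimitive_succ_sub (ha0 : a ≠ 0) (ha1 : a ≠ 1) {k : ℕ} (hk : a + k - 1 ≠ 0) :
    secondMomentPrimitive a (k + 1) - secondMomentPrimitive a k =
      k ^ 2 * (betaTail a k - betaTail a (k + 1)) := by
  have h1a : 1 - a ≠ 0 := sub_ne_zero.2 (Ne.symm ha1)
  have hk1 : (k : ℝ) + 1 ≠ 0 := by positivity
  unfold secondMomentPrimitive
  rw [betaTail_succ hk]
  push_cast
  field_simp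
  ring

theorem firstMomentPrimitive_one (ha : Gamma a ≠ 0) (ha1 : a ≠ 1) :
    firstMomentPrimitive a 1 = -(1 / (1 - a)) := by
  have h1a : 1 - a ≠ 0 := sub_ne_zero.2 (Ne.symm ha1)
  rw [firstMomentPrimitive, betaTail_one ha]
  field_simp
  ring

theorem tendsto_betaTail_succ (ha : 0 < a) :
    Tendsto (fun n : ℕ => Gamma a * (n * (n + 1)) * betaTail a (n + 1) / (n : ℝ) ^ a)
      atTop (𝓝 1) := by
  refine (tendsto_Gamma_nat_add_div_Gamma_mul_rpow (s := a)
    fun m => ((neg_nonpos.2 m.cast_nonneg).trans_lt ha).ne').congr' ?_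
  filter_upwards [eventually_ge_atTop 1] with n hn
  have hn0 : (n : ℝ) ≠ 0 := by positivity
  have hΓ : Gamma a ≠ 0 := (Gamma_pos_of_pos ha).ne'
  have hΓn : Gamma n ≠ 0 := by positivity
  rw [betaTail, Nat.cast_succ, show a + (n + 1) - 1 = n + a by ring,
    Gamma_add_one (by positivity), Gamma_add_one hn0]
  field_simp

theorem tendsto_firstMomentPrimitive (ha : 0 < a) (ha1 : a < 1) :
    Tendsto (fun n : ℕ => firstMomentPrimitive a (n + 1)) atTop (𝓝 0) := by
  have hpow : Tendsto (fun n : ℕ => (n : ℝ) ^ (a - 1)) atTop (𝓝 0) := by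
    simpa [Function.comp_def] using
      (tendsto_rpow_neg_atTop (y := 1 - a) (by linarith)).comp tendsto_natCast_atTop_atTop
  have hlim := (((tendsto_betaTail_succ ha).mul
    (tendsto_one_div_add_atTop_nhds_zero_nat.sub_const ((2 - a) / (1 - a)))).mul hpow).div_const
    (Gamma a)
  rw [mul_zero, zero_div] at hlim
  refine hlim.congr' ?_
  filter_upwards [eventually_ge_atTop 1] with n hn
  have hn0 : (n : ℝ) ≠ 0 := by positivity
  have hΓ : Gamma a ≠ 0 := (Gamma_pos_of_pos ha).ne'
  have h1a : 1 - a ≠ 0 := by linarith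
  rw [rpow_sub_one hn0, firstMomentPrimitive]
  push_cast
  field_simp

theorem tendsto_secondMomentPrimitive_div (ha : 0 < a) (ha2 : a ≠ 2) :
    Tendsto (fun n : ℕ => secondMomentPrimitive a (n + 1) / ((2 - a) / Gamma (a + 1) * n ^ a))
      atTop (𝓝 1) := by
  have hlim := (tendsto_betaTail_succ ha).mul
    (tendsto_sq_add_linear_div_mul_succ ((2 * a - 1) / (1 - a)) (-(a / (2 - a))))
  rw [mul_one] at hlim
  refine hlim.congr' ?_
  filter_upwards [eventually_ge_atTop 1] with n hn
  have hn0 : (n : ℝ) ≠ 0 := by positivity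
  have hΓ : Gamma a ≠ 0 := (Gamma_pos_of_pos ha).ne'
  have h2a : 2 - a ≠ 0 := sub_ne_zero.2 (Ne.symm ha2)
  rw [Gamma_add_one ha.ne', secondMomentPrimitive]
  push_cast
  field_simp
  ring

end BetaTail

section Moments

variable {Ω : Type*} [MeasurableSpace Ω] {μ : Measure Ω} {ξ : Ω → ℕ} {a : ℝ}

theorem toReal_measure_eq_betaTail_sub (ha : 0 ≤ a) (hξ : Measurable ξ)
    (htail : ∀ n : ℕ, 1 ≤ n → μ {ω | n ≤ ξ ω} = ENNReal.ofReal (betaTail a n)) {k : ℕ}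
    (hk : 1 ≤ k) : (μ {ω | ξ ω = k}).toReal = betaTail a k - betaTail a (k + 1) := by
  have htail' (n : ℕ) (hn : 1 ≤ n) : (μ {ω | n ≤ ξ ω}).toReal = betaTail a n := by
    rw [htail n hn, ENNReal.toReal_ofReal (betaTail_nonneg ha hn)]
  rw [toReal_measure_eq_toReal_tail_sub hξ ((htail k hk).trans_ne ENNReal.ofReal_ne_top),
    htail' k hk, htail' (k + 1) (by omega)]

theorem sum_range_mul_toReal_measure_eq (ha : 0 < a) (ha1 : a ≠ 1) (hξ : Measurable ξ)
    (htail : ∀ n : ℕ, 1 ≤ n → μ {ω | n ≤ ξ ω} = ENNReal.ofReal (betaTail a n)) (n : ℕ) :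
    ∑ k ∈ range (n + 1), (k : ℝ) * (μ {ω | ξ ω = k}).toReal =
      firstMomentPrimitive a (n + 1) - firstMomentPrimitive a 1 :=
  sum_range_succ_eq_sub_of_eq_succ_sub (by simp) (fun k hk => by
    have hrec : 0 < a + k - 1 := by linarith [(Nat.one_le_cast (α := ℝ)).2 hk]
    rw [toReal_measure_eq_betaTail_sub ha.le hξ htail hk,
      firstMomentPrimitive_succ_sub ha1 hrec.ne']) n

theorem sum_range_sq_mul_toReal_measure_eq (ha : 0 < a) (ha1 : a ≠ 1) (hξ : Measurable ξ)
    (htail : ∀ n : ℕ, 1 ≤ n → μ {ω | n ≤ ξ ω} = ENNReal.ofReal (betaTail a n)) (n : ℕ) :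
    ∑ k ∈ range (n + 1), (k : ℝ) ^ 2 * (μ {ω | ξ ω = k}).toReal =
      secondMomentPrimitive a (n + 1) - secondMomentPrimitive a 1 :=
  sum_range_succ_eq_sub_of_eq_succ_sub (by simp) (fun k hk => by
    have hrec : 0 < a + k - 1 := by linarith [(Nat.one_le_cast (α := ℝ)).2 hk]
    rw [toReal_measure_eq_betaTail_sub ha.le hξ htail hk,
      secondMomentPrimitive_succ_sub ha.ne' ha1 hrec.ne']) n

end Moments

theorem beta_coalescent_moments_general {Ω : Type*} [MeasurableSpace Ω] (μ : Measure Ω)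
    (a : ℝ) (ha : 0 < a) (ha1 : a < 1)
    (ξ : Ω → ℕ) (hmeas : Measurable ξ)
    (htail : ∀ n : ℕ, 1 ≤ n →
      μ {ω | n ≤ ξ ω} =
        ENNReal.ofReal (Real.Gamma (a + n - 1) / (Real.Gamma a * Real.Gamma (n + 1)))) :
    (∑' k : ℕ, (k : ℝ) * (μ {ω | ξ ω = k}).toReal = 1 / (1 - a)) ∧
    Tendsto (fun n : ℕ =>
        (∑ k ∈ Finset.range (n + 1), (k : ℝ) ^ 2 * (μ {ω | ξ ω = k}).toReal)
          / ((2 - a) / Real.Gamma (a + 1) * (n : ℝ) ^ a)) atTop (nhds 1) ∧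
    ¬ Summable (fun k : ℕ => (k : ℝ) ^ 2 * (μ {ω | ξ ω = k}).toReal) := by
  have hscale : Tendsto (fun n : ℕ => (2 - a) / Gamma (a + 1) * (n : ℝ) ^ a) atTop atTop :=
    ((tendsto_rpow_atTop ha).comp tendsto_natCast_atTop_atTop).const_mul_atTop
      (div_pos (by linarith) (Gamma_pos_of_pos (by linarith)))
  have hsecond : Tendsto (fun n : ℕ =>
      (∑ k ∈ range (n + 1), (k : ℝ) ^ 2 * (μ {ω | ξ ω = k}).toReal)
        / ((2 - a) / Gamma (a + 1) * (n : ℝ) ^ a)) atTop (𝓝 1) := by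
    have h := (tendsto_secondMomentPrimitive_div ha (ha1.trans one_lt_two).ne).sub
      ((tendsto_const_nhds (x := secondMomentPrimitive a 1)).div_atTop hscale)
    rw [sub_zero] at h
    exact h.congr fun n => by
      rw [sum_range_sq_mul_toReal_measure_eq ha ha1.ne hmeas htail, ← sub_div]
  have hfirst : Tendsto (fun n : ℕ =>
      ∑ k ∈ range (n + 1), (k : ℝ) * (μ {ω | ξ ω = k}).toReal) atTop (𝓝 (1 / (1 - a))) := by
    simp_rw [sum_range_mul_toReal_measure_eq ha ha1.ne hmeas htail]
    simpa [firstMomentPrimitive_one (Gamma_pos_of_pos ha).ne' ha1.ne] using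
      (tendsto_firstMomentPrimitive ha ha1).sub_const (firstMomentPrimitive a 1)
  refine ⟨?_, hsecond, not_summable_of_tendsto_sum_range_div hscale hsecond⟩
  exact ((hasSum_iff_tendsto_nat_of_nonneg (fun k => by positivity) _).2
    ((tendsto_add_atTop_iff_nat 1).1 hfirst)).tsum_eq

/-- For `0 < a < 1` and a positive-integer valued random variable `ξ` with tail
`ℙ{ξ ≥ n} = Γ(a+n-1)/(Γ(a)Γ(n+1))`: the mean is `1/(1-a)`, the truncated second
moments satisfy `∑_{k=1}^n k² ℙ{ξ=k} ∼ ((2-a)/Γ(a+1))·n^a`, and the variance is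
infinite (the full second moment series diverges). -/
theorem beta_coalescent_moments {Ω : Type*} [MeasurableSpace Ω] (μ : Measure Ω)
    [IsProbabilityMeasure μ] (a : ℝ) (ha : 0 < a) (ha1 : a < 1)
    (ξ : Ω → ℕ) (hmeas : Measurable ξ) (hpos : ∀ ω, 1 ≤ ξ ω)
    (htail : ∀ n : ℕ, 1 ≤ n →
      μ {ω | n ≤ ξ ω} =
        ENNReal.ofReal (Real.Gamma (a + n - 1) / (Real.Gamma a * Real.Gamma (n + 1)))) :
    (∑' k : ℕ, (k : ℝ) * (μ {ω | ξ ω = k}).toReal = 1 / (1 - a)) ∧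
    Tendsto (fun n : ℕ =>
        (∑ k ∈ Finset.range (n + 1), (k : ℝ) ^ 2 * (μ {ω | ξ ω = k}).toReal)
          / ((2 - a) / Real.Gamma (a + 1) * (n : ℝ) ^ a)) atTop (nhds 1) ∧
    ¬ Summable (fun k : ℕ => (k : ℝ) ^ 2 * (μ {ω | ξ ω = k}).toReal) :=
  beta_coalescent_moments_general μ a ha ha1 ξ hmeas htail
end

section
/- For the β(a,1)-coalescent with a > 0, a ≠ 2, the total rate g_n = a·∑_{k=1}^{n-1} k·B(a,k) equals (a/(a-2))·(1 - Γ(a)Γ(n+1)/Γ(a+n-1)) for all n ≥ 2; for a = 2, g_n = 2(h_n - 1) where h_n = ∑_{i=1}^n 1/i. -/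
open Real

/-- The Beta function `B(a,b) = Γ(a)Γ(b)/Γ(a+b)`. -/
noncomputable def betaFun (a b : ℝ) : ℝ := Real.Gamma a * Real.Gamma b / Real.Gamma (a + b)

/-!
With `f k = Γ(a)Γ(k+1)/Γ(a+k-1)`, the recurrence `Γ(s+1) = sΓ(s)` gives
`(a-2)·k·B(a,k) = f k - f (k+1)`, so the sum telescopes to `f 1 - f n = 1 - f n`.
For `a = 2` the terms are `k·B(2,k) = 1/(k+1)`, which sum to `h_n - 1`.
-/

open Finset

theorem natCast_mul_betaFun (a : ℝ) {k : ℕ} (hk : k ≠ 0) :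
    (k : ℝ) * betaFun a k = Gamma a * Gamma (k + 1) / Gamma (a + k) := by
  rw [betaFun, Gamma_add_one (Nat.cast_ne_zero.2 hk)]
  ring

theorem natCast_mul_betaFun_two {k : ℕ} (hk : k ≠ 0) : (k : ℝ) * betaFun 2 k = 1 / (k + 1) := by
  have hΓ : Gamma (k + 1) ≠ 0 := (Gamma_pos_of_pos (by positivity)).ne'
  rw [natCast_mul_betaFun 2 hk, Gamma_two, show (2 : ℝ) + k = k + 1 + 1 by ring,
    Gamma_add_one (by positivity : (k : ℝ) + 1 ≠ 0)]
  field_simp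

theorem Gamma_ratio_sub_Gamma_ratio_succ (a : ℝ) {x : ℝ} (hx : x + 1 ≠ 0) :
    Gamma a * Gamma (x + 1) / Gamma (a + x - 1)
        - Gamma a * Gamma (x + 1 + 1) / Gamma (a + (x + 1) - 1)
      = (a - 2) * (Gamma a * Gamma (x + 1) / Gamma (a + x)) := by
  rw [Gamma_add_one hx, show a + (x + 1) - 1 = a + x by ring]
  by_cases hax : a + x - 1 = 0
  -- Here `Γ(a+x) = 1` is not `(a+x-1)·Γ(a+x-1) = 0`, but `a - 2 = -(x+1)` saves the identity.
  · have h1 : a + x = 1 := by linarith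
    rw [hax, h1, Gamma_zero, Gamma_one]
    linear_combination (-Gamma a * Gamma (x + 1)) * h1
  · have hΓ : Gamma (a + x) = (a + x - 1) * Gamma (a + x - 1) := by
      rw [← Gamma_add_one hax, sub_add_cancel]
    rw [hΓ]
    rcases eq_or_ne (Gamma (a + x - 1)) 0 with h0 | h0
    · simp [h0]
    · field_simp
      ring

theorem sub_two_mul_sum_natCast_mul_betaFun {a : ℝ} (ha : Gamma a ≠ 0) {n : ℕ} (hn : 1 ≤ n) :
    (a - 2) * ∑ k ∈ Icc 1 (n - 1), (k : ℝ) * betaFun a k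
      = 1 - Gamma a * Gamma (n + 1) / Gamma (a + n - 1) := by
  set f : ℕ → ℝ := fun k ↦ Gamma a * Gamma (k + 1) / Gamma (a + k - 1) with hf
  have hf1 : f 1 = 1 := by
    simp only [hf, Nat.cast_one, one_add_one_eq_two, Gamma_two, add_sub_cancel_right, mul_one]
    exact div_self ha
  calc (a - 2) * ∑ k ∈ Icc 1 (n - 1), (k : ℝ) * betaFun a k
      = ∑ k ∈ Ico 1 n, -(f (k + 1) - f k) := by
        rw [Icc_sub_one_right_eq_Ico_of_not_isMin (by simp; omega), mul_sum]
        refine sum_congr rfl fun k hk ↦ ?_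
        rw [natCast_mul_betaFun a (by grind), neg_sub, hf]
        push_cast
        exact (Gamma_ratio_sub_Gamma_ratio_succ a (by positivity)).symm
    _ = f 1 - f n := by rw [sum_neg_distrib, sum_Ico_sub f hn, neg_sub]
    _ = 1 - Gamma a * Gamma (n + 1) / Gamma (a + n - 1) := by rw [hf1]

theorem sum_natCast_mul_betaFun_two {n : ℕ} (hn : 1 ≤ n) :
    ∑ k ∈ Icc 1 (n - 1), (k : ℝ) * betaFun 2 k = ∑ i ∈ Icc 1 n, 1 / (i : ℝ) - 1 := by
  calc ∑ k ∈ Icc 1 (n - 1), (k : ℝ) * betaFun 2 k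
      = ∑ k ∈ Ico 1 n, 1 / ((k + 1 : ℕ) : ℝ) := by
        rw [Icc_sub_one_right_eq_Ico_of_not_isMin (by simp; omega)]
        refine sum_congr rfl fun k hk ↦ ?_
        rw [natCast_mul_betaFun_two (by grind), Nat.cast_succ]
    _ = ∑ i ∈ Ico 2 (n + 1), 1 / (i : ℝ) := sum_Ico_add' (fun i : ℕ ↦ 1 / (i : ℝ)) 1 n 1
    _ = ∑ i ∈ Icc 1 n, 1 / (i : ℝ) - 1 := by
        rw [← Ico_add_one_right_eq_Icc, sum_eq_sum_Ico_succ_bot (by omega : 1 < n + 1)]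
        norm_num

/-- For the `β(a,1)`-coalescent, the total rate `g_n = a·∑_{k=1}^{n-1} k·B(a,k)` equals
`(a/(a-2))·(1 - Γ(a)Γ(n+1)/Γ(a+n-1))` when `a ≠ 2`, and `2(h_n - 1)` when `a = 2`,
for all `n ≥ 2`. -/
theorem beta_coalescent_total_rates (a : ℝ) (ha : 0 < a) (n : ℕ) (hn : 2 ≤ n) :
    (a ≠ 2 →
      a * ∑ k ∈ Finset.Icc 1 (n - 1), (k : ℝ) * betaFun a k
        = a / (a - 2) * (1 - Real.Gamma a * Real.Gamma (n + 1) / Real.Gamma (a + n - 1))) ∧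
    (a = 2 →
      a * ∑ k ∈ Finset.Icc 1 (n - 1), (k : ℝ) * betaFun a k
        = 2 * ((∑ i ∈ Finset.Icc 1 n, 1 / (i : ℝ)) - 1)) := by
  refine ⟨fun ha2 ↦ ?_, fun ha2 ↦ ?_⟩
  · rw [← sub_two_mul_sum_natCast_mul_betaFun (Gamma_pos_of_pos ha).ne' (by omega)]
    field_simp [sub_ne_zero.2 ha2]
  · rw [ha2, sum_natCast_mul_betaFun_two (by omega)]
end

section
/- Let ξ_1, ξ_2, … be i.i.d. positive-integer valued random variables and fix n ∈ ℕ. Define R_0 = 0 and R_k = R_{k-1} + ξ_k·1{R_{k-1} + ξ_k < n}, and let M_n = ∑_{l=0}^∞ 1{R_l + ξ_{l+1} < n} be the number of jumps of (R_k). With N_n = inf{k ≥ 1 : S_k ≥ n} and S_k = ξ_1 + ⋯ + ξ_k, it holds pathwise that M_n = N_n - 1 + \widehat{M}, where \widehat{M} counts, starting from index N_n and level S_{N_n-1}, the jumps of the analogously truncated process at level n - S_{N_n-1}; moreover M_n - N_n + 1 equals in distribution M'_{n - S_{N_n-1}}, where (M'_k) is an independent copy of (M_k), independent of (N_n, n -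 S_{N_n-1}). -/
open MeasureTheory ProbabilityTheory

/-- The walk truncated to stay below level `m`:
`R_0 = 0`, `R_{k+1} = R_k + x_k·1{R_k + x_k < m}`. -/
def truncWalk (x : ℕ → ℕ) (m : ℕ) : ℕ → ℕ
  | 0 => 0
  | k + 1 => truncWalk x m k + if truncWalk x m k + x k < m then x k else 0

noncomputable def jumps (x : ℕ → ℕ) (m : ℕ) : ℕ :=
  {l : ℕ | truncWalk x m l ≠ truncWalk x m (l + 1)}.ncard

/-- The random walk `S_k = ξ_1 + ⋯ + ξ_k`. -/
def Swalk {Ω : Type*} (ξ : ℕ → Ω → ℕ) (k : ℕ) (ω : Ω) : ℕ :=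
  ∑ i ∈ Finset.range k, ξ i ω

/-- The first passage time `N_n = inf{k ≥ 1 : S_k ≥ n}`. -/
noncomputable def FPT {Ω : Type*} (ξ : ℕ → Ω → ℕ) (n : ℕ) (ω : Ω) : ℕ :=
  sInf {k : ℕ | 1 ≤ k ∧ n ≤ Swalk ξ k ω}

/-!
Restarted at any time `j`, the truncated walk is again a truncated walk, driven by the shifted
increments and truncated at the remaining distance to the level (`truncWalk.add`). Before the
first passage time `N_n` the truncation is inactive and, the increments being positive, every
step is a jump; the increment at time `N_n` overshoots and is rejected. This gives
`M_n = (N_n - 1) + M̂` pathwise.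

For the law, the pair `(N_n, n - S_{N_n - 1})` is determined by the first `N_n` increments, so on
each of its countably many values the shifted sequence `(ξ_{N_n + k})_k` is independent of it
and, the increments being i.i.d., distributed as `(ξ_k)_k`. Hence the pair and the shifted
sequence have joint law `law(pair) ⊗ law(ξ)`, which is the law on `Ω × Ω` on the right.
-/

open Finset

def jumpSet (x : ℕ → ℕ) (m : ℕ) : Set ℕ :=
  {l | truncWalk x m l ≠ truncWalk x m (l + 1)}

def jumpsBefore (x : ℕ → ℕ) (m K : ℕ) : ℕ :=
  #{l ∈ range K | truncWalk x m l ≠ truncWalk x m (l + 1)}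

theorem jumps_eq_ncard_jumpSet (x : ℕ → ℕ) (m : ℕ) : jumps x m = (jumpSet x m).ncard := rfl

namespace truncWalk

variable (x : ℕ → ℕ) (m : ℕ)

theorem le_succ (k : ℕ) : truncWalk x m k ≤ truncWalk x m (k + 1) :=
  Nat.le_add_right _ _

theorem monotone : Monotone (truncWalk x m) :=
  monotone_nat_of_le_succ (le_succ x m)

theorem succ_lt_of_mem_jumpSet {l : ℕ} (hl : l ∈ jumpSet x m) : truncWalk x m (l + 1) < m := by
  simp only [jumpSet, Set.mem_ofPred_eq, truncWalk] at hl ⊢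
  split_ifs at hl ⊢ with h
  · exact h
  · exact absurd (add_zero _).symm hl

theorem add (j k : ℕ) : truncWalk x m (j + k)
    = truncWalk x m j + truncWalk (fun i => x (j + i)) (m - truncWalk x m j) k := by
  induction k with
  | zero => rfl
  | succ k ih =>
    rw [← Nat.add_assoc, truncWalk, truncWalk, ih]
    split_ifs <;> omega

theorem eq_sum_of_sum_lt {j : ℕ} (h : ∑ i ∈ range j, x i < m) :
    truncWalk x m j = ∑ i ∈ range j, x i := by
  induction j with
  | zero => rfl
  | succ j ih =>
    rw [sum_range_succ] at h
    rw [truncWalk, ih (by omega), if_pos h, sum_range_succ]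

end truncWalk

theorem jumpSet_finite (x : ℕ → ℕ) (m : ℕ) : (jumpSet x m).Finite := by
  have hmono : StrictMonoOn (fun l => truncWalk x m (l + 1)) (jumpSet x m) :=
    fun l₁ _ l₂ h₂ hlt =>
      (truncWalk.monotone x m hlt).trans_lt
        (lt_of_le_of_ne (truncWalk.le_succ x m l₂) h₂)
  refine Set.Finite.of_finite_image ?_ hmono.injOn
  exact (Set.finite_Iio m).subset
    (Set.image_subset_iff.2 fun l hl => truncWalk.succ_lt_of_mem_jumpSet x m hl)

theorem jumps_eq_jumpsBefore_add (x : ℕ → ℕ) (m j : ℕ) :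
    jumps x m = jumpsBefore x m j + jumps (fun i => x (j + i)) (m - truncWalk x m j) := by
  have hsplit : jumpSet x m = ↑{l ∈ range j | truncWalk x m l ≠ truncWalk x m (l + 1)} ∪
      (j + ·) '' jumpSet (fun i => x (j + i)) (m - truncWalk x m j) := by
    ext l
    rcases lt_or_ge l j with hl | hl
    · simp only [jumpSet, ne_eq, Set.mem_ofPred_eq, coe_filter, mem_range, Set.mem_union, hl,
        true_and, Set.mem_image, iff_self_or, forall_exists_index, and_imp]
      omega
    · obtain ⟨k, rfl⟩ := Nat.exists_eq_add_of_le hl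
      have hsucc : truncWalk x m (j + k + 1) = _ := truncWalk.add x m j (k + 1)
      simp [jumpSet, truncWalk.add x m j k, hsucc]
  have hdisj : Disjoint (↑{l ∈ range j | truncWalk x m l ≠ truncWalk x m (l + 1)} : Set ℕ)
      ((j + ·) '' jumpSet (fun i => x (j + i)) (m - truncWalk x m j)) := by
    rw [Set.disjoint_left]
    rintro _ hl ⟨k, -, rfl⟩
    simp at hl
  rw [jumps_eq_ncard_jumpSet, hsplit,
    Set.ncard_union_eq hdisj (Finset.finite_toSet _) ((jumpSet_finite _ _).image _),
    Set.ncard_coe_finset, Set.ncard_image_of_injective _ (add_right_injective j)]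
  rfl

theorem jumpsBefore_eq_of_sum_lt {x : ℕ → ℕ} (hx : ∀ k, 0 < x k) {m j : ℕ}
    (h : ∑ i ∈ range j, x i < m) : jumpsBefore x m j = j := by
  rw [jumpsBefore, filter_true_of_mem, card_range]
  intro l hl
  have hsucc : ∑ i ∈ range (l + 1), x i < m :=
    (sum_le_sum_of_subset (range_mono (mem_range.1 hl))).trans_lt h
  have hl : ∑ i ∈ range l, x i < m :=
    (sum_le_sum_of_subset (range_mono l.le_succ)).trans_lt hsucc
  rw [truncWalk.eq_sum_of_sum_lt x m hl, truncWalk.eq_sum_of_sum_lt x m hsucc, sum_range_succ]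
  have := hx l
  omega

theorem jumps_eq_jumps_tail_of_le {x : ℕ → ℕ} {m : ℕ} (h : m ≤ x 0) :
    jumps x m = jumps (fun i => x (1 + i)) m := by
  have hR : truncWalk x m 1 = 0 := by
    simp only [truncWalk, zero_add, ite_eq_right_iff]
    omega
  rw [jumps_eq_jumpsBefore_add x m 1, hR, jumpsBefore]
  simp [hR, truncWalk.eq_1]

theorem jumps_eq_add_jumps_after_passage {x : ℕ → ℕ} (hx : ∀ k, 0 < x k) {m j : ℕ}
    (hlt : ∑ i ∈ range j, x i < m) (hge : m ≤ ∑ i ∈ range (j + 1), x i) :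
    jumps x m = j + jumps (fun i => x (j + 1 + i)) (m - ∑ i ∈ range j, x i) := by
  rw [sum_range_succ] at hge
  rw [jumps_eq_jumpsBefore_add x m j, jumpsBefore_eq_of_sum_lt hx hlt,
    truncWalk.eq_sum_of_sum_lt x m hlt,
    jumps_eq_jumps_tail_of_le (by rw [Nat.add_zero]; omega)]
  simp only [Nat.add_assoc]

section FirstPassage

variable {Ω : Type*} {ξ : ℕ → Ω → ℕ} {n : ℕ}

theorem FPT_spec (hpos : ∀ i ω, 1 ≤ ξ i ω) (ω : Ω) :
    1 ≤ FPT ξ n ω ∧ n ≤ Swalk ξ (FPT ξ n ω) ω := by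
  refine Nat.sInf_mem (s := {k | 1 ≤ k ∧ n ≤ Swalk ξ k ω}) ⟨n + 1, n.succ_pos, ?_⟩
  calc n ≤ ∑ _i ∈ range (n + 1), 1 := by simp
    _ ≤ Swalk ξ (n + 1) ω := sum_le_sum fun i _ => hpos i ω

theorem Swalk_lt_of_lt_FPT (hn : 1 ≤ n) {ω : Ω} {k : ℕ} (hk : k < FPT ξ n ω) :
    Swalk ξ k ω < n := by
  rcases Nat.eq_zero_or_pos k with rfl | hk0
  · exact hn
  · by_contra! h
    exact Nat.notMem_of_lt_sInf hk (⟨hk0, h⟩ : 1 ≤ k ∧ n ≤ Swalk ξ k ω)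

theorem FPT_eq_iff (hpos : ∀ i ω, 1 ≤ ξ i ω) (hn : 1 ≤ n) {ω : Ω} {m : ℕ} :
    FPT ξ n ω = m ↔ 1 ≤ m ∧ n ≤ Swalk ξ m ω ∧ ∀ k < m, Swalk ξ k ω < n := by
  constructor
  · rintro rfl
    exact ⟨(FPT_spec hpos ω).1, (FPT_spec hpos ω).2, fun k hk => Swalk_lt_of_lt_FPT hn hk⟩
  · rintro ⟨hm, hge, hlt⟩
    refine le_antisymm (Nat.sInf_le ⟨hm, hge⟩) (not_lt.1 fun hFm => ?_)
    exact (hlt _ hFm).not_ge (FPT_spec hpos ω).2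

theorem jumps_eq_FPT_sub_one_add (hpos : ∀ i ω, 1 ≤ ξ i ω) (hn : 1 ≤ n) (ω : Ω) :
    jumps (fun k => ξ k ω) n = FPT ξ n ω - 1 +
      jumps (fun k => ξ (FPT ξ n ω + k) ω) (n - Swalk ξ (FPT ξ n ω - 1) ω) := by
  obtain ⟨hN, hge⟩ := FPT_spec hpos ω
  have hN' : FPT ξ n ω - 1 + 1 = FPT ξ n ω := Nat.sub_add_cancel hN
  have := jumps_eq_add_jumps_after_passage (fun k => hpos k ω)
    (Swalk_lt_of_lt_FPT hn (Nat.sub_one_lt_of_le hN le_rfl)) (hN'.symm ▸ hge)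
  rwa [hN'] at this

noncomputable def passageData (ξ : ℕ → Ω → ℕ) (n : ℕ) (ω : Ω) : ℕ × ℕ :=
  (FPT ξ n ω, n - Swalk ξ (FPT ξ n ω - 1) ω)

theorem measurableSet_passageData_preimage (hpos : ∀ i ω, 1 ≤ ξ i ω) (hn : 1 ≤ n) (m r : ℕ) :
    MeasurableSet[⨆ i ∈ Set.Iio m, MeasurableSpace.comap (ξ i) inferInstance]
      (passageData ξ n ⁻¹' {(m, r)}) := by
  set past := ⨆ i ∈ Set.Iio m, MeasurableSpace.comap (ξ i) inferInstance
  have hS : ∀ k ≤ m, Measurable[past] (Swalk ξ k) := fun k hk =>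
    Finset.measurable_sum _ fun i hi => (comap_measurable (ξ i)).mono
      (le_iSup₂ (f := fun i (_ : i ∈ Set.Iio m) => MeasurableSpace.comap (ξ i) inferInstance) i
        ((mem_range.1 hi).trans_le hk)) le_rfl
  have hset : passageData ξ n ⁻¹' {(m, r)} =
      {_ω | 1 ≤ m} ∩ Swalk ξ m ⁻¹' Set.Ici n ∩ (⋂ k ∈ Set.Iio m, Swalk ξ k ⁻¹' Set.Iio n) ∩
        (fun ω => n - Swalk ξ (m - 1) ω) ⁻¹' {r} := by
    ext ω
    simp only [passageData, Set.mem_preimage, Set.mem_singleton_iff, Prod.mk.injEq,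
      Set.mem_inter_iff, Set.mem_ofPred_eq, Set.mem_Ici, Set.mem_iInter, Set.mem_Iio, and_assoc,
      ← FPT_eq_iff hpos hn]
    exact and_congr_right fun h => h ▸ Iff.rfl
  rw [hset]
  exact (((MeasurableSet.const _).inter (hS m le_rfl measurableSet_Ici)).inter
    (.biInter (Set.to_countable _) fun k hk => hS k (le_of_lt hk) measurableSet_Iio)).inter
    ((hS (m - 1) (Nat.sub_le m 1)).const_sub n (measurableSet_singleton r))

theorem measurable_passageData [MeasurableSpace Ω] (hmeas : ∀ i, Measurable (ξ i))
    (hpos : ∀ i ω, 1 ≤ ξ i ω) (hn : 1 ≤ n) : Measurable (passageData ξ n) :=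
  measurable_to_countable' fun p =>
    iSup₂_le (fun i _ => (hmeas i).comap_le) _ (measurableSet_passageData_preimage hpos hn p.1 p.2)

end FirstPassage

theorem measurable_truncWalk (m k : ℕ) : Measurable fun x : ℕ → ℕ => truncWalk x m k := by
  induction k with
  | zero => exact measurable_const
  | succ k ih =>
    exact ih.add <| Measurable.ite ((ih.add (measurable_pi_apply k)) measurableSet_Iio)
      (measurable_pi_apply k) measurable_const

theorem measurable_jumpsBefore (m K : ℕ) : Measurable fun x : ℕ → ℕ => jumpsBefore x m K := by
  simp only [jumpsBefore, card_filter]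
  refine Finset.measurable_sum _ fun l _ => Measurable.ite ?_ measurable_const measurable_const
  exact (measurableSet_eq_fun (measurable_truncWalk m l) (measurable_truncWalk m (l + 1))).compl

theorem tendsto_jumpsBefore (x : ℕ → ℕ) (m : ℕ) :
    Filter.Tendsto (jumpsBefore x m) Filter.atTop (nhds (jumps x m)) := by
  obtain ⟨b, hb⟩ := (jumpSet_finite x m).bddAbove
  refine tendsto_atTop_of_eventually_const (i₀ := b + 1) fun K hK => ?_
  rw [jumps_eq_ncard_jumpSet, jumpsBefore, ← Set.ncard_coe_finset]
  congr 1
  ext l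
  simp only [coe_filter, mem_range, Set.mem_ofPred_eq]
  exact and_iff_right_of_imp fun hl => (hb hl).trans_lt hK

theorem measurable_jumps (m : ℕ) : Measurable fun x : ℕ → ℕ => jumps x m :=
  measurable_of_tendsto_metrizable (measurable_jumpsBefore m)
    (tendsto_pi_nhds.2 fun x => tendsto_jumpsBefore x m)

section RandomIndex

variable {Ω α β : Type*} [MeasurableSpace Ω] [MeasurableSpace α] [MeasurableSpace β]
  [Countable α] [MeasurableSingletonClass α] {G : Ω → α} {W : α → Ω → β}

theorem Measurable.prodMk_randomIndex (hG : Measurable G) (hW : ∀ a, Measurable (W a)) :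
    Measurable fun ω => (G ω, W (G ω) ω) :=
  hG.prodMk <| (measurable_from_prod_countable_right (f := fun q : α × Ω => W q.1 q.2) hW).comp
    (hG.prodMk measurable_id)

theorem map_prodMk_randomIndex_eq_prod {μ : Measure Ω} {ν : Measure β} [SFinite ν]
    (hG : Measurable G) (hW : ∀ a, Measurable (W a))
    (h : ∀ a t, MeasurableSet t → μ (G ⁻¹' {a} ∩ W a ⁻¹' t) = μ (G ⁻¹' {a}) * ν t) :
    μ.map (fun ω => (G ω, W (G ω) ω)) = (μ.map G).prod ν := by
  ext A hA
  have hslice : ∀ a, MeasurableSet (Prod.mk a ⁻¹' A) := fun a => measurable_prodMk_left hA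
  have hfibres : (fun ω => (G ω, W (G ω) ω)) ⁻¹' A
      = ⋃ a, G ⁻¹' {a} ∩ W a ⁻¹' (Prod.mk a ⁻¹' A) := by
    ext ω
    simp
  rw [Measure.map_apply (hG.prodMk_randomIndex hW) hA, Measure.prod_apply hA,
    lintegral_countable', hfibres,
    measure_iUnion (fun a b hab => (pairwise_disjoint_fiber G hab).mono Set.inter_subset_left
      Set.inter_subset_left) fun a => (hG (measurableSet_singleton a)).inter (hW a (hslice a))]
  refine tsum_congr fun a => ?_
  rw [h a _ (hslice a), Measure.map_apply hG (measurableSet_singleton a), mul_comm]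

end RandomIndex

namespace ProbabilityTheory

variable {Ω β : Type*} [MeasurableSpace Ω] [MeasurableSpace β] {μ : Measure Ω} {ξ : ℕ → Ω → β}

theorem iIndepFun.map_shift_eq (hmeas : ∀ i, Measurable (ξ i)) (hindep : iIndepFun ξ μ)
    (hident : ∀ i, μ.map (ξ i) = μ.map (ξ 0)) (m : ℕ) :
    μ.map (fun ω k => ξ (m + k) ω) = μ.map (fun ω k => ξ k ω) := by
  have hlaw : ∀ m, μ.map (fun ω k => ξ (m + k) ω) = Measure.infinitePi fun _ => μ.map (ξ 0) :=
    fun m => by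
      rw [(hindep.precomp (add_right_injective m)).map_fun_eq_infinitePi_map fun k => hmeas _]
      simp only [hident]
  rw [hlaw m, ← hlaw 0]
  simp only [zero_add]

theorem iIndepFun.measure_inter_preimage_shift (hmeas : ∀ i, Measurable (ξ i))
    (hindep : iIndepFun ξ μ) (m : ℕ) {s : Set Ω}
    (hs : MeasurableSet[⨆ i ∈ Set.Iio m, MeasurableSpace.comap (ξ i) inferInstance] s)
    {t : Set (ℕ → β)} (ht : MeasurableSet t) :
    μ (s ∩ (fun ω k => ξ (m + k) ω) ⁻¹' t) = μ s * μ ((fun ω k => ξ (m + k) ω) ⁻¹' t) := by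
  have hfuture : Measurable[⨆ i ∈ Set.Ici m, MeasurableSpace.comap (ξ i) inferInstance]
      fun ω k => ξ (m + k) ω := by
    let _ : MeasurableSpace Ω := ⨆ i ∈ Set.Ici m, MeasurableSpace.comap (ξ i) inferInstance
    exact measurable_pi_lambda _ fun k => (comap_measurable (ξ (m + k))).mono
      (le_iSup₂ (f := fun i (_ : i ∈ Set.Ici m) => MeasurableSpace.comap (ξ i) inferInstance)
        (m + k) (Nat.le_add_right m k)) le_rfl
  exact (Indep_iff _ _ _).1 (indep_iSup_of_disjoint (fun i => (hmeas i).comap_le) hindep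
    (Set.Iio_disjoint_Ici le_rfl)) _ _ hs (hfuture ht)

end ProbabilityTheory

/-- Coupling decomposition: pathwise `M_n = N_n - 1 + M̂`, where `M̂` counts the
jumps of the analogously truncated process built from the shifted increments
`(ξ_{N_n+k})_k` at level `n - S_{N_n-1}`; moreover `M_n - N_n + 1` equals in
distribution `M'_{n - S_{N_n-1}}`, with `(M'_k)` an independent copy of `(M_k)`,
independent of `(N_n, n - S_{N_n-1})` (realized on the product space). -/
theorem coupling_decomposition {Ω : Type*} [MeasurableSpace Ω] (μ : Measure Ω)
    [IsProbabilityMeasure μ] (ξ : ℕ → Ω → ℕ)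
    (hmeas : ∀ i, Measurable (ξ i)) (hpos : ∀ i ω, 1 ≤ ξ i ω)
    (hindep : iIndepFun ξ μ)
    (hident : ∀ i, Measure.map (ξ i) μ = Measure.map (ξ 0) μ)
    (n : ℕ) (hn : 1 ≤ n) :
    (∀ ω, jumps (fun k => ξ k ω) n
        = FPT ξ n ω - 1 +
          jumps (fun k => ξ (FPT ξ n ω + k) ω) (n - Swalk ξ (FPT ξ n ω - 1) ω)) ∧
    Measure.map (fun ω => jumps (fun k => ξ k ω) n + 1 - FPT ξ n ω) μ
      = Measure.map (fun q : Ω × Ω =>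
          jumps (fun k => ξ k q.2) (n - Swalk ξ (FPT ξ n q.1 - 1) q.1)) (μ.prod μ) := by
  refine ⟨jumps_eq_FPT_sub_one_add hpos hn, ?_⟩
  have hseq : Measurable fun ω k => ξ k ω := measurable_pi_lambda _ hmeas
  have hG := measurable_passageData hmeas hpos hn
  have hW : ∀ p : ℕ × ℕ, Measurable fun ω k => ξ (p.1 + k) ω :=
    fun p => measurable_pi_lambda _ fun k => hmeas _
  have hΦ : Measurable fun q : (ℕ × ℕ) × (ℕ → ℕ) => jumps q.2 q.1.2 :=
    measurable_from_prod_countable_right fun p => measurable_jumps p.2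
  have hpath : (fun ω => jumps (fun k => ξ k ω) n + 1 - FPT ξ n ω) =
      (fun q => jumps q.2 q.1.2) ∘
        fun ω => (passageData ξ n ω, fun k => ξ ((passageData ξ n ω).1 + k) ω) := by
    funext ω
    have hdecomp := jumps_eq_FPT_sub_one_add hpos hn ω
    have hN := (FPT_spec (n := n) hpos ω).1
    simp only [Function.comp_apply, passageData]
    omega
  have hstrongMarkov :
      μ.map (fun ω => (passageData ξ n ω, fun k => ξ ((passageData ξ n ω).1 + k) ω))
        = (μ.map (passageData ξ n)).prod (μ.map fun ω k => ξ k ω) := by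
    refine map_prodMk_randomIndex_eq_prod hG hW fun p t ht => ?_
    rw [hindep.measure_inter_preimage_shift hmeas p.1
      (measurableSet_passageData_preimage hpos hn p.1 p.2) ht, ← Measure.map_apply (hW p) ht,
      hindep.map_shift_eq hmeas hident]
  rw [hpath, ← Measure.map_map hΦ (hG.prodMk_randomIndex hW), hstrongMarkov,
    Measure.map_prod_map _ _ hG hseq, Measure.map_map hΦ (hG.prodMap hseq)]
  rfl
end

section
/- Consider the Markov chain on ℕ with transition probabilities π_{n,1} = 1/n = 1 - π_{n,n-1} for n ≥ 3 and π_{2,1} = 1, and let X_n be the absorption time at state 1 starting from n. Then ℙ{X_n = n-1} = 2/n and ℙ{X_n = k} = 1/n for each k ∈ {1, …, n-2}; consequently X_n/n converges in distribution to the uniform distribution on (0,1). -/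
/-!
For `f n k = ℙ{X_n = k}` the first-step equations read `f (n+1) (k+1) = [k = 0]/(n+1) + n/(n+1) · f n k`.
Since `f n 0 = 0`, induction on `n` gives the laws `2/n` at `k = n-1` and `1/n` below it. Hence, once
`⌊t n⌋₊ ≤ n - 2`, the distribution function of `X_n` at `t n` is exactly `⌊t n⌋₊ / n`, which tends to `t`.
-/

open Filter Finset

/-- The first-step equations characterising `f n k = ℙ{X_n = k}`. -/
structure IsDeathChainLaw (f : ℕ → ℕ → ℝ) : Prop where
  apply_two : ∀ k, f 2 k = if k = 1 then 1 else 0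
  apply_of_three_le : ∀ n, 3 ≤ n → ∀ k, f n k
    = (1 / n) * (if k = 1 then 1 else 0)
      + (1 - 1 / n) * (if 1 ≤ k then f (n - 1) (k - 1) else 0)

namespace IsDeathChainLaw

variable {f : ℕ → ℕ → ℝ} {n k : ℕ}

theorem apply_zero (h : IsDeathChainLaw f) (hn : 2 ≤ n) : f n 0 = 0 := by
  rcases hn.eq_or_lt with rfl | hn
  · simp [h.apply_two]
  · simp [h.apply_of_three_le n hn]

theorem apply_succ_succ (h : IsDeathChainLaw f) (hn : 2 ≤ n) (k : ℕ) :
    f (n + 1) (k + 1) = (if k = 0 then 1 else 0) / (n + 1) + n / (n + 1) * f n k := by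
  have hn' : (n : ℝ) + 1 ≠ 0 := by positivity
  rw [h.apply_of_three_le (n + 1) (by omega)]
  simp only [Nat.add_eq_right, Nat.add_sub_cancel, le_add_iff_nonneg_left, zero_le, if_true,
    Nat.cast_add, Nat.cast_one]
  field_simp
  ring

theorem apply_pred (h : IsDeathChainLaw f) (hn : 2 ≤ n) : f n (n - 1) = 2 / n := by
  induction n, hn using Nat.le_induction with
  | base => simp [h.apply_two]
  | succ n hn ih =>
    obtain ⟨m, rfl⟩ : ∃ m, n = m + 1 := ⟨n - 1, by omega⟩
    have hm : (m : ℝ) + 1 ≠ 0 := by positivity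
    rw [Nat.add_sub_cancel] at ih ⊢
    rw [h.apply_succ_succ hn, ih, if_neg (by omega)]
    push_cast
    field_simp
    ring

theorem apply_of_mem_Icc (h : IsDeathChainLaw f) (hn : 2 ≤ n) (hk : k ∈ Icc 1 (n - 2)) :
    f n k = 1 / n := by
  induction n, hn using Nat.le_induction generalizing k with
  | base => simp at hk
  | succ n hn ih =>
    obtain ⟨j, rfl⟩ : ∃ j, k = j + 1 := ⟨k - 1, by simp at hk; omega⟩
    have hn' : (n : ℝ) + 1 ≠ 0 := by positivity
    rw [h.apply_succ_succ hn]
    rcases j.eq_zero_or_pos with rfl | hj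
    · simp [h.apply_zero hn]
    · rw [ih (by simp at hk ⊢; omega), if_neg hj.ne']
      push_cast
      field_simp
      ring

theorem sum_range_succ_eq (h : IsDeathChainLaw f) {m : ℕ} (hmn : m + 2 ≤ n) :
    ∑ k ∈ range (m + 1), f n k = m / n := by
  have hf : ∀ i ∈ range m, f n (i + 1) = 1 / n := fun i hi =>
    h.apply_of_mem_Icc (by omega) (by simp at hi ⊢; omega)
  rw [sum_range_succ', h.apply_zero (by omega), add_zero, sum_congr rfl hf, sum_const,
    card_range, nsmul_eq_mul, mul_one_div]

end IsDeathChainLaw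

theorem eventually_natFloor_mul_add_le {t : ℝ} (ht : t < 1) (c : ℕ) :
    ∀ᶠ n : ℕ in atTop, ⌊t * n⌋₊ + c ≤ n := by
  have hlin : Tendsto (fun n : ℕ => (1 - t) * n) atTop atTop :=
    tendsto_natCast_atTop_atTop.const_mul_atTop (by linarith)
  filter_upwards [hlin.eventually_ge_atTop (c : ℝ), eventually_ge_atTop c] with n hn hcn
  have : ⌊t * n⌋₊ ≤ n - c := Nat.floor_le_of_le (by push_cast [hcn]; linarith)
  omega

/-- For the death chain with `π_{2,1} = 1` and `π_{n,1} = 1/n = 1 - π_{n,n-1}`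
for `n ≥ 3`, let `f n k = ℙ{X_n = k}` be the distribution of the absorption
time at state 1 starting from `n`. Then `ℙ{X_n = n-1} = 2/n`,
`ℙ{X_n = k} = 1/n` for `1 ≤ k ≤ n-2`, and `X_n/n` converges in distribution to
the uniform distribution on `(0,1)`. -/
theorem death_chain_uniform_limit (f : ℕ → ℕ → ℝ)
    (hf2 : ∀ k, f 2 k = if k = 1 then 1 else 0)
    (hfrec : ∀ n, 3 ≤ n → ∀ k, f n k
      = (1 / n) * (if k = 1 then 1 else 0)
        + (1 - 1 / n) * (if 1 ≤ k then f (n - 1) (k - 1) else 0)) :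
    (∀ n : ℕ, 2 ≤ n →
      f n (n - 1) = 2 / n ∧ ∀ k ∈ Finset.Icc 1 (n - 2), f n k = 1 / n) ∧
    (∀ t ∈ Set.Ioo (0:ℝ) 1,
      Tendsto (fun n : ℕ => ∑ k ∈ Finset.range (⌊t * n⌋₊ + 1), f n k)
        atTop (nhds t)) := by
  have h : IsDeathChainLaw f := ⟨hf2, hfrec⟩
  refine ⟨fun n hn => ⟨h.apply_pred hn, fun k hk => h.apply_of_mem_Icc hn hk⟩, ?_⟩
  rintro t ⟨ht0, ht1⟩
  have hsum : (fun n : ℕ => (⌊t * n⌋₊ : ℝ) / n)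
      =ᶠ[atTop] fun n => ∑ k ∈ range (⌊t * n⌋₊ + 1), f n k := by
    filter_upwards [eventually_natFloor_mul_add_le ht1 2] with n hn
    exact (h.sum_range_succ_eq hn).symm
  exact ((tendsto_nat_floor_mul_div_atTop ht0.le).comp tendsto_natCast_atTop_atTop).congr' hsum
end
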